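/- Let R ≥ 1 be real, let w ∈ ℂ with |w| ≤ R, and let x be a real number with 0 ≤ x ≤ 1/2. Then |(1+x)^w − 1| ≤ x·|w|·(1 + (1/2)·e^{2R}). -/

import Mathlib

/-!
Write `(1 + x) ^ w = exp z` with `z = w log (1 + x)`. Since `0 ≤ log (1 + x) ≤ x ≤ 1/2`,
`‖z‖ ≤ x ‖w‖` and `‖z‖ ≤ R / 2`, so `‖exp z - 1‖ ≤ ‖z‖ e^‖z‖ ≤ x ‖w‖ e^(R/2)`. Finally
`t ≤ 1 + t⁴ / 2` for every real `t`, applied to `t = e^(R/2)`.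
-/

open Complex

theorem Complex.norm_ofReal_cpow_sub_one_le {a : ℝ} (ha : 0 < a) (w : ℂ) :
    ‖(a : ℂ) ^ w - 1‖ ≤ ‖w‖ * |Real.log a| * Real.exp (‖w‖ * |Real.log a|) := by
  rw [cpow_def_of_ne_zero (ofReal_ne_zero.2 ha.ne'), ← ofReal_log ha.le]
  simpa [mul_comm] using norm_exp_sub_sum_le_norm_mul_exp (Real.log a * w) 1

theorem Real.exp_le_one_add_half_mul_exp_four_mul (a : ℝ) :
    Real.exp a ≤ 1 + 1 / 2 * Real.exp (4 * a) := by
  have h4 : Real.exp (4 * a) = Real.exp a ^ 4 := by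
    rw [← Real.exp_nat_mul]
    norm_num
  -- `t⁴ / 2 - t + 1 = (t² - 1)² / 2 + (t - 1/2)² + 1/4`
  nlinarith [sq_nonneg (Real.exp a ^ 2 - 1), sq_nonneg (Real.exp a - 1 / 2)]

theorem cpow_one_add_sub_one_bound (R : ℝ) (w : ℂ) (hw : ‖w‖ ≤ R)
    (x : ℝ) (hx0 : 0 ≤ x) (hx : x ≤ 1 / 2) :
    ‖(((1 + x : ℝ) : ℂ) ^ w) - 1‖ ≤
      x * ‖w‖ * (1 + (1 / 2) * Real.exp (2 * R)) := by
  have hlog_nonneg : 0 ≤ Real.log (1 + x) := Real.log_nonneg (by linarith)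
  have hlog_le : Real.log (1 + x) ≤ x := by
    linarith [Real.log_le_sub_one_of_pos (by linarith : 0 < 1 + x)]
  have hz_le : ‖w‖ * Real.log (1 + x) ≤ ‖w‖ * x :=
    mul_le_mul_of_nonneg_left hlog_le (norm_nonneg w)
  have hwx : ‖w‖ * x ≤ R / 2 := by nlinarith [norm_nonneg w]
  calc ‖(((1 + x : ℝ) : ℂ) ^ w) - 1‖
      ≤ ‖w‖ * Real.log (1 + x) * Real.exp (‖w‖ * Real.log (1 + x)) := by
        simpa only [abs_of_nonneg hlog_nonneg] using
          norm_ofReal_cpow_sub_one_le (by linarith : 0 < 1 + x) w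
    _ ≤ ‖w‖ * x * Real.exp (R / 2) := by gcongr; linarith
    _ ≤ x * ‖w‖ * (1 + (1 / 2) * Real.exp (2 * R)) := by
        rw [mul_comm x]
        gcongr
        have h := Real.exp_le_one_add_half_mul_exp_four_mul (R / 2)
        rwa [show 4 * (R / 2) = 2 * R by ring] at h
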